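/- arXiv:1606.06803 — 2 statements merged into one kernel-verified Lean document; each statement's English description precedes it below -/
import Mathlib

section
/- Let T : [0,1) → [0,1) be the tripling map T(x) = 3x - ⌊3x⌋. Suppose ψ ∈ [0,1) has ternary digits d₁d₂d₃... (d_n = ⌊3^n ψ⌋ mod 3) such that every even-indexed digit equals 2 and every odd-indexed digit is 0 or 1. Then for every l ∈ ℕ and every k ∈ {0,1,2,3}, |T^l(ψ) - k/3| > 1/27. -/
/-!
Each application of the tripling map multiplies by 3 and subtracts an integer, so `T^l ψ` is
`3^l ψ` up to an integer and its ternary digits are those of `ψ` shifted by `l`. For any real `y`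
with digits `d₁ d₂ d₃ …`, the residue of `⌊27 y⌋` modulo 9 is `3 d₂ + d₃`, which locates `y` within
its interval between consecutive multiples of `1/3`. The alternating digit pattern forces
`3 d₂ + d₃ ∈ {2, 5, 6, 7}`, so `27 y` stays more than one unit away from every multiple of 9.
-/

open Set

/-- The tripling map on `[0,1)`. -/
noncomputable def triplingMap (x : ℝ) : ℝ := 3 * x - ⌊3 * x⌋

/-- The `n`-th ternary digit (n ≥ 1) of `x`. -/
noncomputable def ternDigit (x : ℝ) (n : ℕ) : ℤ := ⌊3 ^ n * x⌋ % 3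

lemma exists_int_triplingMap_iterate_eq (x : ℝ) (l : ℕ) :
    ∃ a : ℤ, triplingMap^[l] x = 3 ^ l * x + a := by
  induction l with
  | zero => exact ⟨0, by simp⟩
  | succ l ih =>
    obtain ⟨a, ha⟩ := ih
    refine ⟨3 * a - ⌊3 * triplingMap^[l] x⌋, ?_⟩
    rw [Function.iterate_succ_apply', triplingMap, ha]
    push_cast
    ring

lemma ternDigit_three_pow_mul (x : ℝ) (l n : ℕ) : ternDigit (3 ^ l * x) n = ternDigit x (n + l) := by
  rw [ternDigit, ternDigit, ← mul_assoc, ← pow_add]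

lemma ternDigit_nonneg (x : ℝ) (n : ℕ) : 0 ≤ ternDigit x n :=
  Int.emod_nonneg _ three_ne_zero

lemma ternDigit_lt_three (x : ℝ) (n : ℕ) : ternDigit x n < 3 :=
  Int.emod_lt_of_pos _ three_pos

lemma floor_three_pow_succ_mul (y : ℝ) (n : ℕ) :
    ⌊3 ^ (n + 1) * y⌋ = 3 * ⌊3 ^ n * y⌋ + ternDigit y (n + 1) := by
  have h : ⌊3 ^ n * y⌋ = ⌊3 ^ (n + 1) * y⌋ / (3 : ℕ) := by
    rw [← Int.floor_div_natCast]
    congr 1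
    push_cast
    ring
  rw [ternDigit, h]
  omega

lemma floor_twentySeven_mul_emod_nine (y : ℝ) :
    ⌊27 * y⌋ % 9 = 3 * ternDigit y 2 + ternDigit y 3 := by
  have h₂ := floor_three_pow_succ_mul y 1
  have h₃ := floor_three_pow_succ_mul y 2
  norm_num at h₂ h₃
  have := ternDigit_nonneg y 2
  have := ternDigit_nonneg y 3
  have := ternDigit_lt_three y 2
  have := ternDigit_lt_three y 3
  omega

lemma one_div_twentySeven_lt_abs_sub_div_three (y : ℝ) (k : ℤ)
    (hlow : 2 ≤ 3 * ternDigit y 2 + ternDigit y 3) (hhigh : 3 * ternDigit y 2 + ternDigit y 3 ≤ 7) :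
    1 / 27 < |y - k / 3| := by
  have hmod := floor_twentySeven_mul_emod_nine y
  have hle := Int.floor_le (27 * y)
  have hlt := Int.lt_floor_add_one (27 * y)
  rcases (by omega : 9 * k + 2 ≤ ⌊27 * y⌋ ∨ ⌊27 * y⌋ + 2 ≤ 9 * k) with h | h
  · have h' : ((9 * k + 2 : ℤ) : ℝ) ≤ ⌊27 * y⌋ := by exact_mod_cast h
    push_cast at h'
    rw [lt_abs]
    left
    linarith
  · have h' : ((⌊27 * y⌋ + 2 : ℤ) : ℝ) ≤ ((9 * k : ℤ) : ℝ) := by exact_mod_cast h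
    push_cast at h'
    rw [lt_abs]
    right
    linarith

theorem tripling_orbit_away_from_thirds_general (ψ : ℝ)
    (hodd : ∀ n : ℕ, 1 ≤ n → Odd n → ternDigit ψ n = 0 ∨ ternDigit ψ n = 1)
    (heven : ∀ n : ℕ, 1 ≤ n → Even n → ternDigit ψ n = 2) :
    ∀ l : ℕ, ∀ k : ℕ, k ≤ 3 → |triplingMap^[l] ψ - (k : ℝ) / 3| > 1 / 27 := by
  intro l k _
  obtain ⟨a, ha⟩ := exists_int_triplingMap_iterate_eq ψ l
  have hwindow : 2 ≤ 3 * ternDigit ψ (2 + l) + ternDigit ψ (3 + l) ∧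
      3 * ternDigit ψ (2 + l) + ternDigit ψ (3 + l) ≤ 7 := by
    rcases Nat.even_or_odd l with hl | hl
    · have h₂ := heven (2 + l) (by omega) (even_two.add hl)
      have h₃ := hodd (3 + l) (by omega) ((by decide : Odd 3).add_even hl)
      omega
    · have h₂ := hodd (2 + l) (by omega) (even_two.add_odd hl)
      have h₃ := heven (3 + l) (by omega) ((by decide : Odd 3).add_odd hl)
      omega
  have key := one_div_twentySeven_lt_abs_sub_div_three (3 ^ l * ψ) (k - 3 * a)
    (by simpa only [ternDigit_three_pow_mul] using hwindow.1)
    (by simpa only [ternDigit_three_pow_mul] using hwindow.2)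
  rw [ha]
  convert key using 2
  push_cast
  ring

theorem tripling_orbit_away_from_thirds (ψ : ℝ) (hψ : ψ ∈ Ico (0 : ℝ) 1)
    (hodd : ∀ n : ℕ, 1 ≤ n → Odd n → ternDigit ψ n = 0 ∨ ternDigit ψ n = 1)
    (heven : ∀ n : ℕ, 1 ≤ n → Even n → ternDigit ψ n = 2) :
    ∀ l : ℕ, ∀ k : ℕ, k ≤ 3 → |triplingMap^[l] ψ - (k : ℝ) / 3| > 1 / 27 :=
  tripling_orbit_away_from_thirds_general ψ hodd heven
end

section
/- With ψ as above (ternary digits alternating between a digit in {0,1} at odd positions and the digit 2 at even positions) and T the tripling map: if l is even then T^l(ψ) ∈ [k/3, (k+1)/3) for some k ∈ {0,1}, and if l is odd then T^l(ψ) ∈ [2/3, 1). -/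
open Set

/-! `T` multiplies by `3` modulo `1`, so `T^l ψ` is the fractional part of `3^l ψ`, whose first
ternary digit is the `(l+1)`-st digit of `ψ`; the digit `d` places a number in `[d/3, (d+1)/3)`. -/

lemma triplingMap_eq_fract (x : ℝ) : triplingMap x = Int.fract (3 * x) := rfl

lemma fract_natCast_mul_fract (b : ℕ) (x : ℝ) :
    Int.fract ((b : ℝ) * Int.fract x) = Int.fract ((b : ℝ) * x) := by
  rw [← Int.self_sub_floor x, mul_sub, ← Int.cast_natCast b, ← Int.cast_mul,
    Int.fract_sub_intCast]

lemma triplingMap_iterate_fract (x : ℝ) (l : ℕ) :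
    triplingMap^[l] (Int.fract x) = Int.fract (3 ^ l * x) := by
  induction l with
  | zero => simp
  | succ l ih =>
    rw [Function.iterate_succ_apply', ih, triplingMap_eq_fract, pow_succ', mul_assoc]
    exact_mod_cast fract_natCast_mul_fract 3 (3 ^ l * x)

lemma floor_natCast_mul_fract {b : ℕ} (hb : 0 < b) (x : ℝ) :
    ⌊(b : ℝ) * Int.fract x⌋ = ⌊(b : ℝ) * x⌋ % b := by
  have hshift : ⌊(b : ℝ) * Int.fract x⌋ = ⌊(b : ℝ) * x⌋ - b * ⌊x⌋ := by
    rw [← Int.self_sub_floor x, mul_sub, ← Int.cast_natCast b, ← Int.cast_mul,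
      Int.floor_sub_intCast]
  have hnonneg : 0 ≤ ⌊(b : ℝ) * Int.fract x⌋ :=
    Int.floor_nonneg.2 (mul_nonneg b.cast_nonneg (Int.fract_nonneg x))
  have hlt : ⌊(b : ℝ) * Int.fract x⌋ < b := by
    rw [Int.floor_lt]
    exact_mod_cast mul_lt_of_lt_one_right (by exact_mod_cast hb) (Int.fract_lt_one x)
  rw [← Int.sub_mul_emod_self_left _ _ ⌊x⌋, ← hshift, Int.emod_eq_of_lt hnonneg hlt]

lemma floor_mul_eq_iff_mem_Ico {c : ℝ} (hc : 0 < c) (x : ℝ) (d : ℤ) :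
    ⌊c * x⌋ = d ↔ x ∈ Ico (d / c) ((d + 1) / c) := by
  rw [Int.floor_eq_iff, mem_Ico, div_le_iff₀' hc, lt_div_iff₀' hc]

lemma triplingMap_iterate_mem_Ico_ternDigit {x : ℝ} (hx : x ∈ Ico (0 : ℝ) 1) (l : ℕ) :
    triplingMap^[l] x ∈
      Ico ((ternDigit x (l + 1) : ℝ) / 3) ((ternDigit x (l + 1) + 1) / 3) := by
  rw [← Int.fract_eq_self.2 hx, triplingMap_iterate_fract, ← floor_mul_eq_iff_mem_Ico three_pos,
    Int.fract_eq_self.2 hx, ternDigit, pow_succ', mul_assoc]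
  exact_mod_cast floor_natCast_mul_fract three_pos (3 ^ l * x)

theorem tripling_orbit_location (ψ : ℝ) (hψ : ψ ∈ Ico (0 : ℝ) 1)
    (hodd : ∀ n : ℕ, 1 ≤ n → Odd n → ternDigit ψ n = 0 ∨ ternDigit ψ n = 1)
    (heven : ∀ n : ℕ, 1 ≤ n → Even n → ternDigit ψ n = 2) :
    ∀ l : ℕ,
      (Even l → ∃ k : ℕ, (k = 0 ∨ k = 1) ∧
        triplingMap^[l] ψ ∈ Ico ((k : ℝ) / 3) (((k : ℝ) + 1) / 3)) ∧
      (Odd l → triplingMap^[l] ψ ∈ Ico (2 / 3 : ℝ) 1) := by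
  intro l
  have hloc := triplingMap_iterate_mem_Ico_ternDigit hψ l
  refine ⟨fun hl => ?_, fun hl => ?_⟩
  · rcases hodd (l + 1) (by omega) hl.add_one with hd | hd
    · exact ⟨0, Or.inl rfl, by simpa [hd] using hloc⟩
    · exact ⟨1, Or.inr rfl, by simpa [hd] using hloc⟩
  · norm_num [heven (l + 1) (by omega) hl.add_one] at hloc
    exact hloc
end
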